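/- If s ∈ ℝ^d is a zero of the mean field, i.e., h(s) = 0 (equivalently, s = ∫ S(ξ) π_{η̂(s)}(ξ) dξ is a fixed point of the map s ↦ E_{π_{η̂(s)}}[S]), then η̂(s) is a critical point of the marginal log-likelihood: ∇ℓ(η̂(s)) = 0. -/

import Mathlib

/-! At `η₀ = η̂ s`, the first-order condition for the maximization of `-Ψ + ⟪s, Φ⟫` on the open
set `Θ` reads `∇Ψ η₀ = (DΦ η₀)† s`. Substituting this into the differentiated partition function
`Z = ∫ L` gives `∇Z η₀ = (DΦ η₀)† ∫ L η₀ • (S - s) = Z η₀ • (DΦ η₀)† (h s)`, which vanishes when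
`h s = 0`; hence so does `∇ℓ = ∇Z / Z`. -/

open MeasureTheory
open scoped RealInnerProductSpace

section Gradient

variable {E F : Type*} [NormedAddCommGroup E] [InnerProductSpace ℝ E] [CompleteSpace E]
  [NormedAddCommGroup F] [InnerProductSpace ℝ F] [CompleteSpace F]

theorem HasGradientAt.log {f : E → ℝ} {f' x : E} (hf : HasGradientAt f f' x) (hx : f x ≠ 0) :
    HasGradientAt (fun y => Real.log (f y)) ((f x)⁻¹ • f') x := by
  rw [hasGradientAt_iff_hasFDerivAt, map_smul]
  exact (hasGradientAt_iff_hasFDerivAt.1 hf).log hx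

theorem IsLocalMax.gradient_eq_adjoint_fderiv {Ψ : E → ℝ} {Φ : E → F} {η : E} (s : F)
    (hΨ : DifferentiableAt ℝ Ψ η) (hΦ : DifferentiableAt ℝ Φ η)
    (hmax : IsLocalMax (fun η => -Ψ η + ⟪s, Φ η⟫) η) :
    gradient Ψ η = ContinuousLinearMap.adjoint (fderiv ℝ Φ η) s := by
  have hderiv := hmax.hasFDerivAt_eq_zero
    (hΨ.hasFDerivAt.neg.add ((innerSL ℝ s).hasFDerivAt.comp η hΦ.hasFDerivAt))
  refine ext_inner_right ℝ fun v => ?_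
  have hv := congrArg (· v) hderiv
  simp only [add_apply, neg_apply, ContinuousLinearMap.comp_apply, innerSL_apply_apply,
    zero_apply] at hv
  rw [← hΨ.hasGradientAt.fderiv_apply, ContinuousLinearMap.adjoint_inner_left]
  linarith

end Gradient

section Integral

variable {α F : Type*} [MeasurableSpace α] {μ : Measure α} [NormedAddCommGroup F] [NormedSpace ℝ F]

theorem MeasureTheory.Integrable.smul_sub_const {f : α → ℝ} {g : α → F} (hf : Integrable f μ)
    (hfg : Integrable (fun x => ‖g x‖ * f x) μ) (hg : AEStronglyMeasurable g μ) (c : F) :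
    Integrable (fun x => f x • (g x - c)) μ := by
  have hsmul : Integrable (fun x => f x • g x) μ :=
    hfg.mono (hf.aestronglyMeasurable.smul hg) (Filter.Eventually.of_forall fun x => by
      simp [norm_smul, mul_comm])
  simp only [smul_sub]
  exact hsmul.sub (hf.smul_const c)

theorem integral_div_smul (f : α → ℝ) (g : α → F) (Z : ℝ) :
    ∫ x, (f x / Z) • g x ∂μ = Z⁻¹ • ∫ x, f x • g x ∂μ := by
  simp only [div_eq_inv_mul, mul_smul, integral_smul]

end Integral

theorem statement3_general
    (c d l : ℕ)
    (Θ : Set (EuclideanSpace ℝ (Fin c))) (hΘ : IsOpen Θ)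
    (Ψ : EuclideanSpace ℝ (Fin c) → ℝ)
    (Φ : EuclideanSpace ℝ (Fin c) → EuclideanSpace ℝ (Fin d))
    (hΨ : ContDiffOn ℝ 1 Ψ Θ) (hΦ : ContDiffOn ℝ 1 Φ Θ)
    (S : EuclideanSpace ℝ (Fin l) → EuclideanSpace ℝ (Fin d))
    (hS : Measurable S)
    (L : EuclideanSpace ℝ (Fin c) → EuclideanSpace ℝ (Fin l) → ℝ)
    (hLint : ∀ η ∈ Θ, Integrable (L η))
    (hLpos : ∀ η ∈ Θ, 0 < ∫ ξ, L η ξ)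
    (hSint : ∀ η ∈ Θ, Integrable (fun ξ => ‖S ξ‖ * L η ξ))
    (ℓ : EuclideanSpace ℝ (Fin c) → ℝ)
    (hℓ : ∀ η, ℓ η = Real.log (∫ ξ, L η ξ))
    (π : EuclideanSpace ℝ (Fin c) → EuclideanSpace ℝ (Fin l) → ℝ)
    (hπ : ∀ η ξ, π η ξ = L η ξ / ∫ ξ', L η ξ')
    -- differentiation under the integral sign in η is valid for ∫ L(η; ξ) dξ
    (hDUI : ∀ η ∈ Θ, HasGradientAt (fun η' => ∫ ξ, L η' ξ)
      (∫ ξ, L η ξ • (-gradient Ψ η + ContinuousLinearMap.adjoint (fderiv ℝ Φ η) (S ξ))) η)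
    (ηhat : EuclideanSpace ℝ (Fin d) → EuclideanSpace ℝ (Fin c))
    (hηhatΘ : ∀ s, ηhat s ∈ Θ)
    (hmax : ∀ s : EuclideanSpace ℝ (Fin d), ∀ η ∈ Θ,
      -Ψ η + ⟪s, Φ η⟫ ≤ -Ψ (ηhat s) + ⟪s, Φ (ηhat s)⟫)
    (h : EuclideanSpace ℝ (Fin d) → EuclideanSpace ℝ (Fin d))
    (hh : ∀ s, h s = ∫ ξ, π (ηhat s) ξ • (S ξ - s))
 :
    ∀ s, h s = 0 → gradient ℓ (ηhat s) = 0 := by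
  intro s hs
  set η₀ := ηhat s
  have hη₀ : Θ ∈ nhds η₀ := hΘ.mem_nhds (hηhatΘ s)
  have hZpos : 0 < ∫ ξ, L η₀ ξ := hLpos η₀ (hηhatΘ s)
  have hgradΨ : gradient Ψ η₀ = ContinuousLinearMap.adjoint (fderiv ℝ Φ η₀) s :=
    IsLocalMax.gradient_eq_adjoint_fderiv s
      ((hΨ.contDiffAt hη₀).differentiableAt one_ne_zero)
      ((hΦ.contDiffAt hη₀).differentiableAt one_ne_zero)
      (Filter.eventually_of_mem hη₀ fun η hη => hmax s η hη)
  have hmean : ∫ ξ, L η₀ ξ • (S ξ - s) = 0 := by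
    rw [hh] at hs
    simp only [hπ, integral_div_smul, smul_eq_zero, inv_eq_zero] at hs
    exact hs.resolve_left hZpos.ne'
  have hscore : ∫ ξ, L η₀ ξ • (-gradient Ψ η₀ + ContinuousLinearMap.adjoint (fderiv ℝ Φ η₀) (S ξ))
      = ContinuousLinearMap.adjoint (fderiv ℝ Φ η₀) (∫ ξ, L η₀ ξ • (S ξ - s)) := by
    rw [← ContinuousLinearMap.integral_comp_comm _ ((hLint η₀ (hηhatΘ s)).smul_sub_const
      (hSint η₀ (hηhatΘ s)) hS.aestronglyMeasurable s)]
    simp only [hgradΨ, map_smul, map_sub, neg_add_eq_sub]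
  have hZ : HasGradientAt (fun η => ∫ ξ, L η ξ) 0 η₀ := by
    simpa only [hscore, hmean, map_zero] using hDUI η₀ (hηhatΘ s)
  rw [funext hℓ]
  simpa only [smul_zero] using (hZ.log hZpos.ne').gradient

theorem statement3
    (c d l : ℕ)
    (Θ : Set (EuclideanSpace ℝ (Fin c))) (hΘ : IsOpen Θ)
    (Ψ : EuclideanSpace ℝ (Fin c) → ℝ)
    (Φ : EuclideanSpace ℝ (Fin c) → EuclideanSpace ℝ (Fin d))
    (hΨ : ContDiffOn ℝ 1 Ψ Θ) (hΦ : ContDiffOn ℝ 1 Φ Θ)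
    (S : EuclideanSpace ℝ (Fin l) → EuclideanSpace ℝ (Fin d))
    (hS : Measurable S)
    (L : EuclideanSpace ℝ (Fin c) → EuclideanSpace ℝ (Fin l) → ℝ)
    (hL : ∀ η ξ, L η ξ = Real.exp (-Ψ η + ⟪S ξ, Φ η⟫))
    (hLint : ∀ η ∈ Θ, Integrable (L η))
    (hLpos : ∀ η ∈ Θ, 0 < ∫ ξ, L η ξ)
    (hSint : ∀ η ∈ Θ, Integrable (fun ξ => ‖S ξ‖ * L η ξ))
    (ℓ : EuclideanSpace ℝ (Fin c) → ℝ)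
    (hℓ : ∀ η, ℓ η = Real.log (∫ ξ, L η ξ))
    (π : EuclideanSpace ℝ (Fin c) → EuclideanSpace ℝ (Fin l) → ℝ)
    (hπ : ∀ η ξ, π η ξ = L η ξ / ∫ ξ', L η ξ')
    -- differentiation under the integral sign in η is valid for ∫ L(η; ξ) dξ
    (hDUI : ∀ η ∈ Θ, HasGradientAt (fun η' => ∫ ξ, L η' ξ)
      (∫ ξ, L η ξ • (-gradient Ψ η + ContinuousLinearMap.adjoint (fderiv ℝ Φ η) (S ξ))) η)
    (ηhat : EuclideanSpace ℝ (Fin d) → EuclideanSpace ℝ (Fin c))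
    (hηhatΘ : ∀ s, ηhat s ∈ Θ)
    (hηhatC1 : ContDiff ℝ 1 ηhat)
    (hmax : ∀ s : EuclideanSpace ℝ (Fin d), ∀ η ∈ Θ,
      -Ψ η + ⟪s, Φ η⟫ ≤ -Ψ (ηhat s) + ⟪s, Φ (ηhat s)⟫)
    (w : EuclideanSpace ℝ (Fin d) → ℝ)
    (hw : ∀ s, w s = -ℓ (ηhat s))
    (h : EuclideanSpace ℝ (Fin d) → EuclideanSpace ℝ (Fin d))
    (hh : ∀ s, h s = ∫ ξ, π (ηhat s) ξ • (S ξ - s))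
 :
    ∀ s, h s = 0 → gradient ℓ (ηhat s) = 0 :=
  statement3_general c d l Θ hΘ Ψ Φ hΨ hΦ S hS L hLint hLpos hSint ℓ hℓ π hπ hDUI ηhat hηhatΘ hmax h
    hh
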